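/- arXiv:1903.02843 — 5 statements merged into one kernel-verified Lean document; each statement's English description precedes it below -/
import Mathlib

section
/- Local rendezvous of Algorithm 1: in the setting of the previous statement, for every vertex v of a finite graph G and every time t, there exists a time s with t ≤ s ≤ t + |N[v]| such that c_u(s) ≠ 1 for every u ∈ N[v]. Consequently, for each v there are infinitely many times at which no vertex of N[v] is in the critical section. -/
/-- The closed neighborhood of a vertex as a finset. -/
def closedNbhd {V : Type*} [Fintype V] [DecidableEq V]
    (G : SimpleGraph V) [DecidableRel G.Adj] (v : V) : Finset V :=
  insert v (G.neighborFinset v)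

/-- `MaxN v` : the maximum closed-neighborhood size over the closed neighborhood of `v`. -/
def maxN {V : Type*} [Fintype V] [DecidableEq V]
    (G : SimpleGraph V) [DecidableRel G.Adj] (v : V) : ℕ :=
  (closedNbhd G v).sup (fun u => (closedNbhd G u).card)

lemma mem_closedNbhd_comm {V : Type*} [Fintype V] [DecidableEq V]
    (G : SimpleGraph V) [DecidableRel G.Adj] {u v : V}
    (h : u ∈ closedNbhd G v) : v ∈ closedNbhd G u := by
  simp only [closedNbhd, Finset.mem_insert, SimpleGraph.mem_neighborFinset] at *
  rcases h with h | h
  · exact Or.inl h.symm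
  · exact Or.inr h.symm

lemma clock_formula {V : Type*} [Fintype V] [DecidableEq V]
    (G : SimpleGraph V) [DecidableRel G.Adj]
    (c : V → ℕ → ℕ)
    (hrec : ∀ v t, c v (t + 1) = (c v t + 1) % (maxN G v + 1))
    (u : V) (s k : ℕ) (hk : 1 ≤ k) :
    c u (s + k) = (c u s + k) % (maxN G u + 1) := by
  induction k with
  | zero => omega
  | succ n ih =>
    rcases Nat.eq_or_lt_of_le hk with h | h
    · simp [← h, hrec]
    · have hn : 1 ≤ n := by omega
      rw [← Nat.add_assoc, hrec, ih hn, Nat.mod_add_mod, ← Nat.add_assoc]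

theorem local_rendezvous
    {V : Type*} [Fintype V] [DecidableEq V]
    (G : SimpleGraph V) [DecidableRel G.Adj]
    (c : V → ℕ → ℕ)
    (hrec : ∀ v t, c v (t + 1) = (c v t + 1) % (maxN G v + 1)) (v : V) :
    (∀ t : ℕ, ∃ s : ℕ, t ≤ s ∧ s ≤ t + (closedNbhd G v).card ∧
        ∀ u ∈ closedNbhd G v, c u s ≠ 1) ∧
    {s : ℕ | ∀ u ∈ closedNbhd G v, c u s ≠ 1}.Infinite := by
  set n := (closedNbhd G v).card with hn
  have hmax : ∀ u ∈ closedNbhd G v, n ≤ maxN G u := by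
    intro u hu
    exact Finset.le_sup (f := fun w => (closedNbhd G w).card) (mem_closedNbhd_comm G hu)
  have key : ∀ t : ℕ, ∃ s : ℕ, t ≤ s ∧ s ≤ t + n ∧ ∀ u ∈ closedNbhd G v, c u s ≠ 1 := by
    intro t
    set I : Finset ℕ := Finset.Icc t (t + n) with hI
    set B : Finset ℕ := (closedNbhd G v).biUnion
      (fun u => I.filter (fun s => c u s = 1)) with hB
    have hcard1 : ∀ u ∈ closedNbhd G v, (I.filter (fun s => c u s = 1)).card ≤ 1 := by
      intro u hu
      apply Finset.card_le_one.mpr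
      intro a ha b hb
      simp only [Finset.mem_filter, hI, Finset.mem_Icc] at ha hb
      by_contra hne
      obtain ⟨⟨ha1, ha2⟩, ha3⟩ := ha
      obtain ⟨⟨hb1, hb2⟩, hb3⟩ := hb
      wlog hab : a < b generalizing a b
      · exact this b a (Ne.symm hne) hb3 hb1 hb2 ha3 ha1 ha2 (by omega)
      obtain ⟨k, rfl⟩ : ∃ k, b = a + k := ⟨b - a, by omega⟩
      have hk1 : 1 ≤ k := by omega
      have hkm : k ≤ maxN G u := le_trans (by omega) (hmax u hu)
      have := clock_formula G c hrec u a k hk1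
      rw [ha3, hb3] at this
      rcases lt_or_eq_of_le (show 1 + k ≤ maxN G u + 1 by omega) with h | h
      · rw [Nat.mod_eq_of_lt h] at this; omega
      · rw [h, Nat.mod_self] at this; omega
    have hBcard : B.card ≤ n := by
      calc B.card ≤ ∑ u ∈ closedNbhd G v, (I.filter (fun s => c u s = 1)).card :=
            Finset.card_biUnion_le
        _ ≤ ∑ u ∈ closedNbhd G v, 1 := Finset.sum_le_sum hcard1
        _ = n := by simp [hn]
    have hIcard : I.card = n + 1 := by simp [hI]; omega
    have : ∃ s ∈ I, s ∉ B := by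
      by_contra h
      push_neg at h
      have := Finset.card_le_card h
      omega
    obtain ⟨s, hsI, hsB⟩ := this
    simp only [hI, Finset.mem_Icc] at hsI
    refine ⟨s, hsI.1, hsI.2, ?_⟩
    intro u hu hc
    exact hsB (Finset.mem_biUnion.mpr ⟨u, hu, Finset.mem_filter.mpr
      ⟨Finset.mem_Icc.mpr hsI, hc⟩⟩)
  refine ⟨key, ?_⟩
  apply Set.infinite_of_not_bddAbove
  rintro ⟨b, hb⟩
  obtain ⟨s, hs1, _, hs3⟩ := key (b + 1)
  have : s ≤ b := hb hs3
  omega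
end

section
/- Each robot MOVEs infinitely often: in the setting above with M_j = MaxN(j) ≥ |N[i]| for every j ∈ N[i], for every robot i there are infinitely many times t at which c_j(t) ≠ 0 for all j ∈ N[i]. -/
theorem move_infinitely_often
    {ι : Type*} (Nb : ι → Finset ι) (hself : ∀ i, i ∈ Nb i)
    (c : ι → ℕ → ℕ) (M : ι → ℕ)
    (hrec : ∀ j t, c j (t + 1) = (c j t + 1) % (M j + 1))
    (i : ι)
    (hM : ∀ j ∈ Nb i, (Nb i).card ≤ M j) :
    {t : ℕ | ∀ j ∈ Nb i, c j t ≠ 0}.Infinite := by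
  set n := (Nb i).card with hn
  -- shifted formula for the clocks
  have hshift : ∀ j T k, c j (T + 1 + k) = (c j T + 1 + k) % (M j + 1) := by
    intro j T k
    induction k with
    | zero => simpa using hrec j T
    | succ k ih =>
      have : T + 1 + (k + 1) = (T + 1 + k) + 1 := by ring
      rw [this, hrec, ih, Nat.mod_add_mod]
      ring_nf
  apply Set.infinite_of_forall_exists_gt
  intro T
  -- consider the window T+1, ..., T+1+n
  -- set of offsets where some clock is zero
  set Z : Finset ℕ := (Finset.range (n + 1)).filter
    (fun k => ∃ j ∈ Nb i, c j (T + 1 + k) = 0) with hZ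
  have hcard : Z.card ≤ n := by
    have hch : ∀ k, ∃ j, k ∈ Z → j ∈ Nb i ∧ c j (T + 1 + k) = 0 := by
      intro k
      by_cases hk : k ∈ Z
      · obtain ⟨-, j, hj, h0⟩ := Finset.mem_filter.mp hk
        exact ⟨j, fun _ => ⟨hj, h0⟩⟩
      · exact ⟨i, fun h => absurd h hk⟩
    choose g hg using hch
    have := Finset.card_le_card_of_injOn g (fun k hk => (hg k hk).1) ?_
    · simpa using this
    · intro k1 hk1 k2 hk2 heq
      simp only [Finset.mem_coe] at hk1 hk2
      obtain ⟨hj1, h01⟩ := hg k1 hk1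
      obtain ⟨hj2, h02⟩ := hg k2 hk2
      set j := g k1 with hjdef
      rw [← heq] at h02
      rw [hshift] at h01 h02
      have hd1 : (M j + 1) ∣ (c j T + 1 + k1) := Nat.dvd_of_mod_eq_zero h01
      have hd2 : (M j + 1) ∣ (c j T + 1 + k2) := Nat.dvd_of_mod_eq_zero h02
      have hk1' : k1 < n + 1 := Finset.mem_range.mp (Finset.mem_filter.mp hk1).1
      have hk2' : k2 < n + 1 := Finset.mem_range.mp (Finset.mem_filter.mp hk2).1
      have hMj : n ≤ M j := hM j hj1
      rcases le_total k1 k2 with h | h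
      · have : (M j + 1) ∣ (k2 - k1) := by
          have := Nat.dvd_sub hd2 hd1
          simpa [Nat.add_sub_add_left, Nat.sub_sub_self, show c j T + 1 + k2 - (c j T + 1 + k1) = k2 - k1 by omega] using this
        have := Nat.eq_zero_of_dvd_of_lt this (by omega)
        omega
      · have : (M j + 1) ∣ (k1 - k2) := by
          have := Nat.dvd_sub hd1 hd2
          simpa [show c j T + 1 + k1 - (c j T + 1 + k2) = k1 - k2 by omega] using this
        have := Nat.eq_zero_of_dvd_of_lt this (by omega)
        omega
  have : ∃ k ∈ Finset.range (n + 1), k ∉ Z := by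
    by_contra h
    push_neg at h
    have hsub : Finset.range (n + 1) ⊆ Z := fun k hk => h k hk
    have := Finset.card_le_card hsub
    simp only [Finset.card_range] at this
    omega
  obtain ⟨k, hk, hkZ⟩ := this
  refine ⟨T + 1 + k, ?_, by omega⟩
  intro j hj
  intro h0
  exact hkZ (Finset.mem_filter.mpr ⟨hk, j, hj, h0⟩)
end

section
/- Min-clock synchronization (synchronous unison): let G = (V,E) be a finite connected undirected graph of diameter D, and let each vertex v hold L_v : ℕ → ℕ updated by L_v(t+1) = (min{L_u(t) : u ∈ N[v]} + 1) mod (6D+1). Then there exists a time T such that for all t ≥ T and all adjacent vertices u, v: L_u(t) = L_v(t). -/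
theorem min_clock_unison
    {V : Type*} [Fintype V] [DecidableEq V]
    (G : SimpleGraph V) [DecidableRel G.Adj]
    (hconn : G.Connected) (D : ℕ) (hD : 1 ≤ D)
    (hdiam : ∀ u v : V, G.dist u v ≤ D)
    (L : V → ℕ → ℕ)
    (hrec : ∀ v t, L v (t + 1) =
      ((closedNbhd G v).inf' (by simp [closedNbhd]) (fun u => L u t) + 1) % (6 * D + 1)) :
    ∃ T : ℕ, ∀ t : ℕ, T ≤ t → ∀ u v : V, G.Adj u v → L u t = L v t := by
  have hV : Nonempty V := hconn.nonempty
  have hne : (Finset.univ : Finset V).Nonempty := Finset.univ_nonempty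
  have hcne : ∀ v : V, (closedNbhd G v).Nonempty := fun v => ⟨v, Finset.mem_insert_self _ _⟩
  have hselfmem : ∀ v : V, v ∈ closedNbhd G v := fun v => Finset.mem_insert_self _ _
  set nb : V → ℕ → ℕ := fun v t => (closedNbhd G v).inf' (hcne v) (fun u => L u t) with hnb
  have hrec' : ∀ v t, L v (t + 1) = (nb v t + 1) % (6 * D + 1) := fun v t => hrec v t
  have hM0 : 0 < 6 * D + 1 := by omega
  have nb_le_self : ∀ v t, nb v t ≤ L v t := fun v t => Finset.inf'_le _ (hselfmem v)
  have step_le : ∀ v t, L v (t + 1) ≤ nb v t + 1 := by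
    intro v t; rw [hrec']; exact Nat.mod_le _ _
  have bound : ∀ v t, L v (t + 1) ≤ 6 * D := by
    intro v t; rw [hrec']
    have := Nat.mod_lt (nb v t + 1) hM0
    omega
  have bound1 : ∀ v t, 1 ≤ t → L v t ≤ 6 * D := by
    intro v t ht
    cases t with
    | zero => omega
    | succ t' => exact bound v t'
  have exact_step : ∀ v t, nb v t < 6 * D → L v (t + 1) = nb v t + 1 := by
    intro v t h; rw [hrec']; exact Nat.mod_eq_of_lt (by omega)
  set m : ℕ → ℕ := fun t => Finset.univ.inf' hne (fun v => L v t) with hm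
  have m_le : ∀ v t, m t ≤ L v t := fun v t => Finset.inf'_le _ (Finset.mem_univ v)
  have m_le_nb : ∀ v t, m t ≤ nb v t := by
    intro v t
    exact Finset.le_inf' _ _ (fun u _ => m_le u t)
  -- toward : a neighbor closer to w
  have toward : ∀ (w v : V) (s : ℕ), G.dist v w ≤ s + 1 →
      ∃ u ∈ closedNbhd G v, G.dist u w ≤ s := by
    intro w v s hd
    by_cases hvw : v = w
    · exact ⟨v, hselfmem v, by simp [hvw, SimpleGraph.dist_self]⟩
    · obtain ⟨p, hp⟩ := (hconn v w).exists_walk_length_eq_dist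
      cases p with
      | nil => exact absurd rfl hvw
      | @cons _ x _ h q =>
        refine ⟨x, Finset.mem_insert_of_mem ((G.mem_neighborFinset v x).mpr h), ?_⟩
        have h1 : G.dist x w ≤ q.length := SimpleGraph.dist_le q
        simp only [SimpleGraph.Walk.length_cons] at hp
        omega
  -- upper propagation from a vertex
  have prop_upper : ∀ (w : V) (t1 s : ℕ), ∀ v, G.dist v w ≤ s → L v (t1 + s) ≤ L w t1 + s := by
    intro w t1 s
    induction s with
    | zero =>
      intro v hv
      have hv0 : G.dist v w = 0 := Nat.le_zero.mp hv
      have : v = w := (hconn.dist_eq_zero_iff).mp hv0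
      subst this
      simp
    | succ s ih =>
      intro v hv
      obtain ⟨u, hu, hud⟩ := toward w v s hv
      have h1 : nb v (t1 + s) ≤ L u (t1 + s) := Finset.inf'_le _ hu
      have h2 := step_le v (t1 + s)
      have h3 := ih u hud
      have : t1 + (s + 1) = (t1 + s) + 1 := by omega
      rw [this]
      omega
  -- persistence of full agreement
  have persist : ∀ T, (∀ u v : V, L u T = L v T) → ∀ t, T ≤ t → ∀ u v : V, L u t = L v t := by
    intro T hT t ht
    induction t, ht using Nat.le_induction with
    | base => exact hT
    | succ t _ ih =>
      intro u v
      have hnbc : ∀ x : V, nb x t = L u t := by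
        intro x
        refine le_antisymm ?_ ?_
        · exact le_of_le_of_eq (nb_le_self x t) (ih x u)
        · exact Finset.le_inf' _ _ (fun y _ => le_of_eq (ih u y))
      rw [hrec', hrec', hnbc u, hnbc v]
  -- existence of a good time t1
  have exists_t1 : ∃ t1, 1 ≤ t1 ∧ (m t1 ≤ 4 * D ∨ m t1 = 6 * D) := by
    by_contra hcon
    push_neg at hcon
    have key : ∀ s, 4 * D + 1 + s ≤ m (1 + s) := by
      intro s
      induction s with
      | zero => have := (hcon 1 le_rfl).1; simpa using this
      | succ s ih =>
        have e1 : 1 + (s + 1) = (1 + s) + 1 := by omega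
        have hpos : 0 < m ((1 + s) + 1) := by
          have := (hcon ((1 + s) + 1) (by omega)).1; omega
        -- no wrap at step 1+s
        have hnw : ∀ v, nb v (1 + s) < 6 * D := by
          intro v
          have hle6 : nb v (1 + s) ≤ 6 * D :=
            le_trans (nb_le_self v (1 + s)) (bound1 v (1 + s) (by omega))
          by_contra hge
          have heq : nb v (1 + s) = 6 * D := by omega
          have : L v ((1 + s) + 1) = 0 := by
            rw [hrec', heq]; simp
          have := m_le v ((1 + s) + 1)
          omega
        have hstep : ∀ v, m (1 + s) + 1 ≤ L v ((1 + s) + 1) := by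
          intro v
          rw [exact_step v (1 + s) (hnw v)]
          have := m_le_nb v (1 + s)
          omega
        have : m (1 + s) + 1 ≤ m ((1 + s) + 1) :=
          Finset.le_inf' _ _ (fun v _ => hstep v)
        rw [e1]
        omega
    have h1 := key (2 * D - 1)
    have e2 : 1 + (2 * D - 1) = 2 * D := by omega
    rw [e2] at h1
    have hm2 : m (2 * D) ≤ 6 * D := by
      obtain ⟨w, -, hw⟩ := Finset.exists_mem_eq_inf' hne (fun v => L v (2 * D))
      have hw' : m (2 * D) = L w (2 * D) := hw
      rw [hw']
      exact bound1 w (2 * D) (by omega)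
    have := (hcon (2 * D) (by omega)).2
    omega
  obtain ⟨t1, ht1, hcase⟩ := exists_t1
  rcases hcase with hle | heq
  · -- main case : min small
    set T0 := t1 + D with hT0
    obtain ⟨w, -, hw⟩ := Finset.exists_mem_eq_inf' hne (fun v => L v t1)
    have hA : ∀ v, L v T0 ≤ m t1 + D := by
      intro v
      have hw' : m t1 = L w t1 := hw
      have := prop_upper w t1 D v (hdiam v w)
      rw [hw']
      exact this
    -- values grow by at most 1 each step
    have hB : ∀ s, ∀ v, L v (T0 + s) ≤ m t1 + D + s := by
      intro s
      induction s with
      | zero => intro v; simpa using hA v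
      | succ s ih =>
        intro v
        have e1 : T0 + (s + 1) = (T0 + s) + 1 := by omega
        rw [e1]
        have h1 := step_le v (T0 + s)
        have h2 := nb_le_self v (T0 + s)
        have h3 := ih v
        omega
    have hnw : ∀ s, s < D → ∀ v, nb v (T0 + s) < 6 * D := by
      intro s hs v
      have h1 := le_trans (nb_le_self v (T0 + s)) (hB s v)
      omega
    have hLBm : ∀ s, s ≤ D → m T0 + s ≤ m (T0 + s) := by
      intro s
      induction s with
      | zero => intro _; simp
      | succ s ih =>
        intro hs
        have hs' : s ≤ D := by omega
        have e1 : T0 + (s + 1) = (T0 + s) + 1 := by omega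
        have hstep : ∀ v, m (T0 + s) + 1 ≤ L v ((T0 + s) + 1) := by
          intro v
          rw [exact_step v (T0 + s) (hnw s (by omega) v)]
          have := m_le_nb v (T0 + s)
          omega
        have h2 : m (T0 + s) + 1 ≤ m ((T0 + s) + 1) :=
          Finset.le_inf' _ _ (fun v _ => hstep v)
        have h3 := ih hs'
        rw [e1]
        omega
    have hLB : ∀ v, m T0 + D ≤ L v (T0 + D) :=
      fun v => le_trans (hLBm D le_rfl) (m_le v (T0 + D))
    have hUB : ∀ v, L v (T0 + D) ≤ m T0 + D := by
      obtain ⟨w0, -, hw0⟩ := Finset.exists_mem_eq_inf' hne (fun v => L v T0)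
      intro v
      have hw0' : m T0 = L w0 T0 := hw0
      have := prop_upper w0 T0 D v (hdiam v w0)
      rw [hw0']
      exact this
    have heqall : ∀ u v : V, L u (T0 + D) = L v (T0 + D) := by
      intro u v
      exact le_antisymm (le_trans (hUB u) (hLB v)) (le_trans (hUB v) (hLB u))
    exact ⟨T0 + D, fun t ht u v _ => persist (T0 + D) heqall t ht u v⟩
  · -- min equals 6D : everything equals 6D already
    have hall : ∀ v, L v t1 = 6 * D := by
      intro v
      have h1 := m_le v t1
      have h2 := bound1 v t1 ht1
      omega
    have heqall : ∀ u v : V, L u t1 = L v t1 := by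
      intro u v; rw [hall u, hall v]
    exact ⟨t1, fun t ht u v _ => persist t1 heqall t ht u v⟩
end

section
/- Min-clock spread bound: in the synchronous min-clock system, if at time t₀ some vertex v₀ has L_{v₀}(t₀) = 0 and at that moment every vertex's value is at most 6D − D (no wraparound occurs in the next D steps), then at time t₀ + D every vertex w satisfies L_w(t₀ + D) ≤ D + dist(w, v₀) ≤ 2D... in particular all values at time t₀ + D are at most 2D. -/
theorem min_clock_spread
    {V : Type*} [Fintype V] [DecidableEq V]
    (G : SimpleGraph V) [DecidableRel G.Adj]
    (hconn : G.Connected) (D : ℕ) (hD : 1 ≤ D)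
    (hdiam : ∀ u v : V, G.dist u v ≤ D)
    (L : V → ℕ → ℕ)
    (hrec : ∀ v t, L v (t + 1) =
      ((closedNbhd G v).inf' (by simp [closedNbhd]) (fun u => L u t) + 1) % (6 * D + 1))
    (t₀ : ℕ) (v₀ : V) (hzero : L v₀ t₀ = 0)
    (hbound : ∀ w : V, L w t₀ ≤ 6 * D - D) :
    ∀ w : V, L w (t₀ + D) ≤ D + G.dist w v₀ ∧ L w (t₀ + D) ≤ 2 * D := by
  have key : ∀ k, k ≤ D → ∀ w : V, G.dist w v₀ ≤ k → L w (t₀ + k) ≤ k := by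
    intro k
    induction k with
    | zero =>
      intro _ w hw
      have : w = v₀ := by
        have := (SimpleGraph.dist_eq_zero_iff_eq_or_not_reachable).mp (Nat.le_zero.mp hw)
        rcases this with h | h
        · exact h
        · exact absurd (hconn w v₀) h
      simp [this, hzero]
    | succ k ih =>
      intro hk w hw
      -- find u in closed nbhd of w with dist u v₀ ≤ k
      obtain ⟨u, hu_mem, hu_dist⟩ :
          ∃ u ∈ closedNbhd G w, G.dist u v₀ ≤ k := by
        obtain ⟨p, hp⟩ := hconn.exists_walk_length_eq_dist w v₀
        cases p with
        | nil =>
          exact ⟨v₀, by simp [closedNbhd], by simp [SimpleGraph.dist_self]⟩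
        | @cons _ x _ h q =>
          refine ⟨x, ?_, ?_⟩
          · simp [closedNbhd, SimpleGraph.mem_neighborFinset, h]
          · have := G.dist_le q
            simp [SimpleGraph.Walk.length_cons] at hp
            omega
      have hmin : (closedNbhd G w).inf' (by simp [closedNbhd]) (fun u => L u (t₀ + k))
          ≤ k := le_trans (Finset.inf'_le _ hu_mem) (ih (by omega) u hu_dist)
      have := hrec w (t₀ + k)
      rw [show t₀ + (k + 1) = (t₀ + k) + 1 by ring, this]
      have hlt : (closedNbhd G w).inf' (by simp [closedNbhd]) (fun u => L u (t₀ + k)) + 1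
          < 6 * D + 1 := by omega
      rw [Nat.mod_eq_of_lt hlt]
      omega
  intro w
  have h := key D le_rfl w (hdiam w v₀)
  exact ⟨by omega, by omega⟩
end

section
/- Infinitely many rendezvous times: let c₁,...,cₙ : ℕ → ℕ be clocks with cᵢ(t+1) = (cᵢ(t)+1) mod (Mᵢ+1) and Mᵢ ≥ n for all i. Then the set {t : ∀i, cᵢ(t) ≠ 1} is infinite. -/
theorem infinitely_many_rendezvous
    (n : ℕ) (c : Fin n → ℕ → ℕ) (M : Fin n → ℕ)
    (hM : ∀ i, n ≤ M i)
    (hrec : ∀ i t, c i (t + 1) = (c i t + 1) % (M i + 1)) :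
    {t : ℕ | ∀ i, c i t ≠ 1}.Infinite := by
  -- key: if c i t ≤ M i then c i (t+k) = (c i t + k) % (M i + 1)
  have key : ∀ (i : Fin n) t k, c i t ≤ M i → c i (t + k) = (c i t + k) % (M i + 1) := by
    intro i t k h
    induction k with
    | zero => simp [Nat.mod_eq_of_lt (Nat.lt_succ_of_le h)]
    | succ k ih =>
      rw [← Nat.add_assoc, hrec, ih, Nat.mod_add_mod, Nat.add_assoc]
  -- each clock hits value 1 at most once in any window of length ≤ n+1
  have atmost : ∀ (i : Fin n) t1 t2, t1 ≤ t2 → t2 - t1 ≤ n →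
      c i t1 = 1 → c i t2 = 1 → t1 = t2 := by
    intro i t1 t2 hle hdiff h1 h2
    obtain ⟨k, rfl⟩ := Nat.exists_eq_add_of_le hle
    have hk : k ≤ n := by omega
    have h1le : c i t1 ≤ M i := by rw [h1]; exact le_trans i.pos (hM i)
    rw [key i t1 k h1le, h1] at h2
    have : 1 + k ≤ M i + 1 := by have := hM i; omega
    rcases lt_or_eq_of_le this with h | h
    · rw [Nat.mod_eq_of_lt h] at h2; omega
    · rw [h, Nat.mod_self] at h2; omega
  apply Set.infinite_of_not_bddAbove
  intro ⟨a, ha⟩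
  simp only [mem_upperBounds, Set.mem_setOf_eq] at ha
  -- consider window [a+1, a+n+1]
  set S : Finset ℕ := Finset.Icc (a + 1) (a + n + 1) with hS
  have hScard : S.card = n + 1 := by
    rw [hS, Nat.card_Icc]; omega
  set B : Finset ℕ := S.filter (fun t => ∃ i, c i t = 1) with hB
  have hBsub : B ⊆ Finset.univ.biUnion (fun i : Fin n => S.filter (fun t => c i t = 1)) := by
    intro t ht
    rw [hB, Finset.mem_filter] at ht
    obtain ⟨hts, i, hi⟩ := ht
    exact Finset.mem_biUnion.2 ⟨i, Finset.mem_univ i, Finset.mem_filter.2 ⟨hts, hi⟩⟩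
  have hone : ∀ i : Fin n, (S.filter (fun t => c i t = 1)).card ≤ 1 := by
    intro i
    apply Finset.card_le_one.2
    intro t1 ht1 t2 ht2
    rw [Finset.mem_filter, hS, Finset.mem_Icc] at ht1 ht2
    rcases le_total t1 t2 with h | h
    · exact atmost i t1 t2 h (by omega) ht1.2 ht2.2
    · exact (atmost i t2 t1 h (by omega) ht2.2 ht1.2).symm
  have hBcard : B.card ≤ n := by
    calc B.card ≤ (Finset.univ.biUnion (fun i : Fin n => S.filter (fun t => c i t = 1))).card :=
          Finset.card_le_card hBsub
      _ ≤ ∑ i : Fin n, (S.filter (fun t => c i t = 1)).card := Finset.card_biUnion_le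
      _ ≤ ∑ _i : Fin n, 1 := Finset.sum_le_sum (fun i _ => hone i)
      _ = n := by simp
  have : ∃ t ∈ S, t ∉ B := by
    by_contra h
    push_neg at h
    have := Finset.card_le_card h
    omega
  obtain ⟨t, htS, htB⟩ := this
  rw [hB, Finset.mem_filter] at htB
  push_neg at htB
  have hgood : ∀ i, c i t ≠ 1 := htB htS
  have := ha t hgood
  rw [hS, Finset.mem_Icc] at htS
  omega
end
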